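/- Let p be a prime and let f, g ∈ ℤ[x] be nonzero polynomials such that f is monic and the reduction ḡ ∈ 𝔽_p[x] of g modulo p is nonzero. Then res_x(f̄, ḡ) = 0 in 𝔽_p if and only if p divides res_x(f, g) in ℤ. Here the resultant res_x(f̄, ḡ) is taken at the actual degrees of f̄ and ḡ (the degree of ḡ may be smaller than that of g). -/

import Mathlib

open Polynomial

/-- The Sylvester matrix of two polynomials `f`, `g` (of degrees `n := f.natDegree` and
`m := g.natDegree`): an `(m + n) × (m + n)` matrix whose first `m` columns are the shifted
coefficient vectors of `f` and whose last `n` columns are the shifted coefficient vectors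
of `g`. -/
noncomputable def sylvesterMatrix {R : Type*} [CommRing R] (f g : R[X]) :
    Matrix (Fin (g.natDegree + f.natDegree)) (Fin (g.natDegree + f.natDegree)) R :=
  fun i j =>
    if (j : ℕ) < g.natDegree then
      (if (j : ℕ) ≤ (i : ℕ) then f.coeff ((i : ℕ) - (j : ℕ)) else 0)
    else
      (if (j : ℕ) - g.natDegree ≤ (i : ℕ) then g.coeff ((i : ℕ) - ((j : ℕ) - g.natDegree))
       else 0)

/-- The resultant of two polynomials: the determinant of their Sylvester matrix,
taken at their actual degrees. -/
noncomputable def resultant {R : Type*} [CommRing R] (f g : R[X]) : R :=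
  (sylvesterMatrix f g).det

/-!
The Sylvester matrix of `(f, g)` is Mathlib's `Polynomial.sylvester g f` at the actual
degrees, so `res(f, g)` is Mathlib's `Polynomial.resultant g f`. Taking Sylvester matrices at
fixed sizes commutes with reduction, and for monic `f` the degree of `f̄` is that of `f`. Only the
degree of `g` can drop, say by `k`; padding the Sylvester matrix of `(ḡ, f̄)` by `k` columns
multiplies its determinant by `± (lead f̄)^k = ± 1`. Hence `res(f, g) mod p = ± res(f̄, ḡ)`.
-/

theorem Polynomial.ite_le_coeff_sub_eq_ite_mem_Icc {R : Type*} [Semiring R] (p : R[X]) (i j : ℕ) :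
    (if j ≤ i then p.coeff (i - j) else 0) =
      if i ∈ Set.Icc j (j + p.natDegree) then p.coeff (i - j) else 0 := by
  by_cases hji : j ≤ i
  · by_cases hdeg : i ≤ j + p.natDegree
    · simp [hji, hdeg]
    · simp [hji, hdeg, coeff_eq_zero_of_natDegree_lt (show p.natDegree < i - j by omega)]
  · simp [hji]

theorem sylvesterMatrix_eq_sylvester {R : Type*} [CommRing R] (f g : R[X]) :
    sylvesterMatrix f g = Polynomial.sylvester g f g.natDegree f.natDegree := by
  ext i j
  induction j using Fin.addCases <;>
    simp only [sylvesterMatrix, Polynomial.sylvester, Matrix.of_apply, Fin.addCases_left,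
      Fin.addCases_right, Fin.val_castAdd, Fin.val_natAdd, Fin.is_lt, Nat.add_sub_cancel_left,
      if_true, Nat.not_lt.mpr (Nat.le_add_right _ _), if_false, ite_le_coeff_sub_eq_ite_mem_Icc]

theorem resultant_eq_resultant_swap {R : Type*} [CommRing R] (f g : R[X]) :
    _root_.resultant f g = Polynomial.resultant g f := by
  rw [_root_.resultant, sylvesterMatrix_eq_sylvester, Polynomial.resultant]

theorem Polynomial.Monic.resultant_of_natDegree_le {R : Type*} [CommRing R] {f g : R[X]}
    (hf : f.Monic) {m : ℕ} (hg : g.natDegree ≤ m) :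
    Polynomial.resultant g f m f.natDegree =
      (-1) ^ (f.natDegree * (m - g.natDegree)) * Polynomial.resultant g f := by
  obtain ⟨k, rfl⟩ := Nat.exists_eq_add_of_le hg
  rw [Polynomial.resultant_add_left_deg _ _ _ _ _ le_rfl, hf.coeff_natDegree, one_pow, mul_one,
    Nat.add_sub_cancel_left]

theorem Polynomial.Monic.map_resultant {R S : Type*} [CommRing R] [CommRing S] [Nontrivial S]
    (φ : R →+* S) {f : R[X]} (hf : f.Monic) (g : R[X]) :
    φ (_root_.resultant f g) = (-1) ^ (f.natDegree * (g.natDegree - (g.map φ).natDegree)) *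
      _root_.resultant (f.map φ) (g.map φ) := by
  rw [resultant_eq_resultant_swap, resultant_eq_resultant_swap, ← resultant_map_map,
    ← hf.natDegree_map φ, (hf.map φ).resultant_of_natDegree_le natDegree_map_le]

theorem resultant_map_eq_zero_iff_general (p : ℕ) (f g : Polynomial ℤ)
    (hf : f.Monic)
    (hgbar : g.map (Int.castRingHom (ZMod p)) ≠ 0) :
    _root_.resultant (f.map (Int.castRingHom (ZMod p))) (g.map (Int.castRingHom (ZMod p))) = 0 ↔
      (p : ℤ) ∣ _root_.resultant f g := by
  have : Nontrivial (ZMod p) := Polynomial.nontrivial_iff.mp (nontrivial_of_ne _ _ hgbar)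
  rw [← ZMod.intCast_zmod_eq_zero_iff_dvd, ← eq_intCast (Int.castRingHom (ZMod p)),
    hf.map_resultant, (isUnit_neg_one.pow _).mul_right_eq_zero]

/-- Let `p` be a prime and `f, g ∈ ℤ[x]` nonzero with `f` monic and `ḡ ≠ 0` in `𝔽_p[x]`.
Then `res(f̄, ḡ) = 0` in `𝔽_p` if and only if `p ∣ res(f, g)` in `ℤ`. -/
theorem resultant_map_eq_zero_iff (p : ℕ) (hp : p.Prime) (f g : Polynomial ℤ)
    (hf0 : f ≠ 0) (hg0 : g ≠ 0) (hf : f.Monic)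
    (hgbar : g.map (Int.castRingHom (ZMod p)) ≠ 0) :
    _root_.resultant (f.map (Int.castRingHom (ZMod p))) (g.map (Int.castRingHom (ZMod p))) = 0 ↔
      (p : ℤ) ∣ _root_.resultant f g :=
  resultant_map_eq_zero_iff_general p f g hf hgbar
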